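/- The worst-case CVaR at level α of a random variable X over all distributions with mean μ and variance σ² equals μ + σ·√(α/(1−α)); in particular it is finite and the constraint sup CVaR_α ≤ 0 is equivalent to μ + σ√(α/(1−α)) ≤ 0. -/

import Mathlib

/-!
Since `(x)⁺ = (x + |x|)/2` and `E|Y| ≤ √(E Y²)`, every law with mean `μ` and variance `σ²` has
`E[(X - β)⁺] ≤ ((μ - β) + √((μ - β)² + σ²))/2`; with `r = √(α/(1-α))`, the choice
`β = μ - σ(r⁻¹ - r)/2` turns the Rockafellar–Uryasev objective into at most `μ + σr`.
Conversely the two-point law with mass `α` at `μ - σ/r` and `1 - α` at `μ + σr` has mean `μ`,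
variance `σ²`, and its CVaR at level `α` is exactly its upper atom `μ + σr`.
-/

open MeasureTheory ProbabilityTheory

section Moments

variable {Ω : Type*} [MeasurableSpace Ω] {P : Measure Ω} [IsProbabilityMeasure P] {X : Ω → ℝ}

-- `(E|X|)² ≤ E X²` is the nonnegativity of the variance of `|X|`.
lemma integral_abs_le_sqrt_integral_sq (hX : MemLp X 2 P) :
    ∫ ω, |X ω| ∂P ≤ √(∫ ω, X ω ^ 2 ∂P) := by
  have hvar := variance_nonneg (fun ω => |X ω|) P
  rw [variance_eq_sub (by simpa only [Real.norm_eq_abs] using hX.norm)] at hvar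
  simp only [Pi.pow_apply, sq_abs] at hvar
  exact Real.le_sqrt_of_sq_le (by linarith)

lemma integral_max_zero_le (hX : MemLp X 2 P) :
    ∫ ω, max (X ω) 0 ∂P ≤ (∫ ω, X ω ∂P + √(∫ ω, X ω ^ 2 ∂P)) / 2 := by
  have hint : Integrable X P := hX.integrable one_le_two
  calc ∫ ω, max (X ω) 0 ∂P = (∫ ω, X ω ∂P + ∫ ω, |X ω| ∂P) / 2 := by
        rw [← integral_add hint hint.abs, ← integral_div]
        congr with ω
        rcases le_total (X ω) 0 with h | h
        · rw [max_eq_right h, abs_of_nonpos h]; ring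
        · rw [max_eq_left h, abs_of_nonneg h]; ring
    _ ≤ (∫ ω, X ω ∂P + √(∫ ω, X ω ^ 2 ∂P)) / 2 := by
        gcongr
        exact integral_abs_le_sqrt_integral_sq hX

lemma integral_sub_const_sq (hX : MemLp X 2 P) (β : ℝ) :
    ∫ ω, (X ω - β) ^ 2 ∂P = Var[X; P] + (P[X] - β) ^ 2 := by
  have h := variance_eq_sub (X := fun ω => X ω - β) (hX.sub (memLp_const β))
  rw [variance_sub_const hX.aestronglyMeasurable,
    integral_sub (hX.integrable one_le_two) (integrable_const β), integral_const] at h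
  simp only [probReal_univ, one_smul, Pi.pow_apply] at h
  linarith

theorem integral_max_sub_le (hX : MemLp X 2 P) (β : ℝ) :
    ∫ ω, max (X ω - β) 0 ∂P ≤ (P[X] - β + √((P[X] - β) ^ 2 + Var[X; P])) / 2 := by
  have h := integral_max_zero_le (X := fun ω => X ω - β) (hX.sub (memLp_const β))
  rw [integral_sub (hX.integrable one_le_two) (integrable_const β), integral_const,
    integral_sub_const_sq hX β] at h
  simpa only [probReal_univ, one_smul, add_comm (Var[X; P])] using h

end Moments

section CVaR

noncomputable def cvarObjective (α : ℝ) (P : Measure ℝ) (β : ℝ) : ℝ :=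
  β + (1 / (1 - α)) * ∫ x, max (x - β) 0 ∂P

noncomputable def cvar (α : ℝ) (P : Measure ℝ) : ℝ :=
  sInf (Set.range (cvarObjective α P))

variable {α μ σ : ℝ} {P : Measure ℝ}

lemma integral_le_cvarObjective [IsProbabilityMeasure P] (hα0 : 0 ≤ α) (hα1 : α < 1)
    (hP : Integrable (fun x => x) P) (β : ℝ) : ∫ x, x ∂P ≤ cvarObjective α P β := by
  have hsub : Integrable (fun x => x - β) P := hP.sub (integrable_const β)
  have hmono : ∫ x, x - β ∂P ≤ ∫ x, max (x - β) 0 ∂P :=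
    integral_mono hsub (hsub.sup (integrable_const 0)) fun x => le_max_left _ _
  have hnonneg : 0 ≤ ∫ x, max (x - β) 0 ∂P := integral_nonneg fun x => le_max_right _ _
  have hone : 1 ≤ 1 / (1 - α) := by rw [le_div_iff₀ (by linarith)]; linarith
  rw [integral_sub hP (integrable_const β), integral_const, probReal_univ, one_smul] at hmono
  unfold cvarObjective
  nlinarith

lemma cvar_le_cvarObjective [IsProbabilityMeasure P] (hα0 : 0 ≤ α) (hα1 : α < 1)
    (hP : Integrable (fun x => x) P) (β : ℝ) : cvar α P ≤ cvarObjective α P β :=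
  csInf_le ⟨_, Set.forall_mem_range.2 (integral_le_cvarObjective hα0 hα1 hP)⟩
    (Set.mem_range_self β)

theorem cvar_le_of_moments [IsProbabilityMeasure P] (hα0 : 0 < α) (hα1 : α < 1) (hσ : 0 ≤ σ)
    (hP : MemLp (fun x => x) 2 P) (hmean : ∫ x, x ∂P = μ) (hvar : Var[fun x => x; P] = σ ^ 2) :
    cvar α P ≤ μ + σ * √(α / (1 - α)) := by
  have h1α : 0 < 1 - α := by linarith
  set r := √(α / (1 - α))
  have hr0 : 0 < r := Real.sqrt_pos.2 (div_pos hα0 h1α)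
  have hr : 1 / (1 - α) = 1 + r ^ 2 := by
    rw [Real.sq_sqrt (div_pos hα0 h1α).le]
    field_simp
    ring
  -- the minimiser `β = μ - d` of the moment bound
  set d := σ * (r⁻¹ - r) / 2 with hd
  have hsqrt : √(d ^ 2 + σ ^ 2) = σ * (r⁻¹ + r) / 2 := by
    rw [Real.sqrt_eq_iff_eq_sq (by positivity) (by positivity), hd]
    field_simp
    ring
  calc cvar α P ≤ cvarObjective α P (μ - d) :=
        cvar_le_cvarObjective hα0.le hα1 (hP.integrable one_le_two) _
    _ ≤ (μ - d) + 1 / (1 - α) * ((d + √(d ^ 2 + σ ^ 2)) / 2) := by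
        unfold cvarObjective
        gcongr
        simpa [hmean, hvar] using integral_max_sub_le hP (μ - d)
    _ = μ + σ * r := by
        rw [hsqrt, hr, hd]
        field_simp
        ring

section TwoPoint

noncomputable def twoPoint (p a b : ℝ) : Measure ℝ :=
  ENNReal.ofReal p • Measure.dirac a + ENNReal.ofReal (1 - p) • Measure.dirac b

variable {p a b : ℝ}

lemma isProbabilityMeasure_twoPoint (hp0 : 0 ≤ p) (hp1 : p ≤ 1) :
    IsProbabilityMeasure (twoPoint p a b) := by
  constructor
  simp only [twoPoint, Measure.coe_add, Measure.coe_smul, Pi.add_apply, Pi.smul_apply,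
    measure_univ, smul_eq_mul, mul_one]
  rw [← ENNReal.ofReal_add hp0 (sub_nonneg.2 hp1), add_sub_cancel, ENNReal.ofReal_one]

lemma integrable_twoPoint (f : ℝ → ℝ) : Integrable f (twoPoint p a b) :=
  ((integrable_dirac enorm_lt_top).smul_measure ENNReal.ofReal_ne_top).add_measure
    ((integrable_dirac enorm_lt_top).smul_measure ENNReal.ofReal_ne_top)

lemma integral_twoPoint (hp0 : 0 ≤ p) (hp1 : p ≤ 1) (f : ℝ → ℝ) :
    ∫ x, f x ∂twoPoint p a b = p * f a + (1 - p) * f b := by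
  rw [twoPoint, integral_add_measure
      ((integrable_dirac enorm_lt_top).smul_measure ENNReal.ofReal_ne_top)
      ((integrable_dirac enorm_lt_top).smul_measure ENNReal.ofReal_ne_top),
    integral_smul_measure, integral_smul_measure, integral_dirac, integral_dirac,
    ENNReal.toReal_ofReal hp0, ENNReal.toReal_ofReal (sub_nonneg.2 hp1), smul_eq_mul, smul_eq_mul]

lemma cvar_twoPoint (hα0 : 0 ≤ α) (hα1 : α < 1) (hab : a ≤ b) : cvar α (twoPoint α a b) = b := by
  have h1α : 0 < 1 - α := by linarith
  have := isProbabilityMeasure_twoPoint (a := a) (b := b) hα0 hα1.le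
  have hobj : ∀ β, cvarObjective α (twoPoint α a b) β
      = β + α / (1 - α) * max (a - β) 0 + max (b - β) 0 := by
    intro β
    rw [cvarObjective, integral_twoPoint hα0 hα1.le]
    field_simp
    ring
  apply le_antisymm
  · calc cvar α (twoPoint α a b) ≤ cvarObjective α (twoPoint α a b) b :=
          cvar_le_cvarObjective hα0 hα1 (integrable_twoPoint _) b
      _ = b := by rw [hobj, max_eq_right (sub_nonpos.2 hab), sub_self, max_self]; ring
  · refine le_csInf (Set.range_nonempty _) (Set.forall_mem_range.2 fun β => ?_)
    have : 0 ≤ α / (1 - α) * max (a - β) 0 := by positivity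
    rw [hobj]
    linarith [le_max_left (b - β) 0]

end TwoPoint

theorem isGreatest_cvar (hα : α ∈ Set.Ioo 0 1) (hσ : 0 ≤ σ) :
    IsGreatest {y | ∃ P : Measure ℝ, IsProbabilityMeasure P ∧
        Integrable (fun x : ℝ => x) P ∧ Integrable (fun x : ℝ => x ^ 2) P ∧
        (∫ x, x ∂P) = μ ∧ (∫ x, (x - μ) ^ 2 ∂P) = σ ^ 2 ∧ y = cvar α P}
      (μ + σ * √(α / (1 - α))) := by
  obtain ⟨hα0, hα1⟩ := hα
  have h1α : 0 < 1 - α := by linarith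
  set r := √(α / (1 - α))
  have hr0 : 0 < r := Real.sqrt_pos.2 (div_pos hα0 h1α)
  have hr : r ^ 2 * (1 - α) = α := by
    rw [Real.sq_sqrt (div_pos hα0 h1α).le]
    field_simp
  refine ⟨⟨twoPoint α (μ - σ / r) (μ + σ * r), isProbabilityMeasure_twoPoint hα0.le hα1.le,
    integrable_twoPoint _, integrable_twoPoint _, ?_, ?_,
    (cvar_twoPoint hα0.le hα1
      (by linarith [div_nonneg hσ hr0.le, mul_nonneg hσ hr0.le])).symm⟩, ?_⟩
  · rw [integral_twoPoint hα0.le hα1.le]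
    field_simp
    linear_combination σ * hr
  · rw [integral_twoPoint hα0.le hα1.le]
    field_simp
    linear_combination σ ^ 2 * (r ^ 2 - 1) * hr
  · rintro y ⟨P, hP, -, hx2, hmean, hvar, rfl⟩
    have hL2 : MemLp (fun x : ℝ => x) 2 P := (memLp_two_iff_integrable_sq (by fun_prop)).2 hx2
    exact cvar_le_of_moments hα0 hα1 hσ hL2 hmean
      (by rw [variance_eq_integral (by fun_prop), hmean, hvar])

end CVaR

/-- The worst-case CVaR at level `α` over all distributions with mean `μ` and variance `σ²`
equals `μ + σ√(α/(1−α))`; in particular the worst-case CVaR constraint `sup CVaR_α ≤ 0`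
is equivalent to `μ + σ√(α/(1−α)) ≤ 0`. -/
theorem stmt8 (α μ σ : ℝ) (hα : α ∈ Set.Ioo (0 : ℝ) 1) (hσ : 0 < σ) :
    sSup {y : ℝ | ∃ P : Measure ℝ, IsProbabilityMeasure P ∧
        Integrable (fun x : ℝ => x) P ∧ Integrable (fun x : ℝ => x ^ 2) P ∧
        (∫ x, x ∂P) = μ ∧ (∫ x, (x - μ) ^ 2 ∂P) = σ ^ 2 ∧
        y = sInf (Set.range fun β : ℝ =>
          β + (1 / (1 - α)) * ∫ x, max (x - β) 0 ∂P)}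
      = μ + σ * Real.sqrt (α / (1 - α)) ∧
    (sSup {y : ℝ | ∃ P : Measure ℝ, IsProbabilityMeasure P ∧
        Integrable (fun x : ℝ => x) P ∧ Integrable (fun x : ℝ => x ^ 2) P ∧
        (∫ x, x ∂P) = μ ∧ (∫ x, (x - μ) ^ 2 ∂P) = σ ^ 2 ∧
        y = sInf (Set.range fun β : ℝ =>
          β + (1 / (1 - α)) * ∫ x, max (x - β) 0 ∂P)} ≤ 0
      ↔ μ + σ * Real.sqrt (α / (1 - α)) ≤ 0) := by
  have hsup := (isGreatest_cvar (μ := μ) hα hσ.le).csSup_eq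
  exact ⟨hsup, iff_of_eq (congrArg (· ≤ 0) hsup)⟩
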